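/- arXiv:2006.09568 — 3 statements merged into one kernel-verified Lean document; each statement's English description precedes it below -/
import Mathlib

section
/- Let d ≥ 1, r > 0, and N ≥ 1. Let x_0, x_1, …, x_N ∈ ℝ^d satisfy ‖x_i − x_0‖_∞ ≤ r for all 0 ≤ i ≤ N, and let A = {x_0, x_1, …, x_N}. Then the upper C-surface area of the set A_{⊞r} satisfies λ̄_C(∂A_{⊞r}) ≤ 2d·(4r)^{d−1} = 2^{2d−1} d r^{d−1}, and the same bound holds for the upper surface area λ̄(∂A_{⊞r}). -/
open MeasureTheory Set Filter
open scoped ENNReal Pointwise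

/-- The closed unit Euclidean ball in `ℝ^d`. -/
noncomputable def unitBall (d : ℕ) : Set (EuclideanSpace ℝ (Fin d)) := Metric.closedBall 0 1

/-- The closed unit `ℓ∞` ball `C = [−1,1]^d` in `ℝ^d`. -/
def unitCube (d : ℕ) : Set (EuclideanSpace ℝ (Fin d)) := {x | ∀ i, |x i| ≤ 1}

/-- The upper `K`-surface area of `A`:
`λ̄_K(∂A) = limsup_{δ→0⁺} (λ(A ⊕ δK) − λ(A))/δ`. -/
noncomputable def upperSurf {d : ℕ} (K A : Set (EuclideanSpace ℝ (Fin d))) : ℝ≥0∞ :=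
  Filter.limsup (fun δ : ℝ => (volume (A + δ • K) - volume A) / ENNReal.ofReal δ)
    (nhdsWithin 0 (Set.Ioi 0))

/-!
Write `A_{⊞r}` as the union of the boxes `xᵢ + [-r, r]^d` and widen all boxes one coordinate at a
time from half-width `r` to `r + δ`; afterwards the union contains `A_{⊞r} ⊕ δC`. Widening
coordinate `k` turns the union `V` into `W` and adds at most `2δ(4r + 2δ)^(d-1)` of volume.
Indeed, since every `xᵢ` lies within `r` of `x₀` in coordinate `k`, a point of `W` whose two
neighbours `p ± δeₖ` both lie in `W` already lies in `V`; and the set `P` of points of `W` whose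
neighbour `p - δeₖ` (resp. `p + δeₖ`) misses `W` is small: every line parallel to `eₖ` meets `W`
in an interval, so the translates `P + lδeₖ`, `0 ≤ l ≤ M`, are pairwise disjoint, and they all
fit in a box of volume `(4r + 2δ + Mδ)(4r + 2δ)^(d-1)`. Letting `M → ∞` gives
`λ(P) ≤ δ(4r + 2δ)^(d-1)`, and letting `δ → 0` gives the bound for `C`; `B ⊆ C` gives the other.
-/

open Topology

theorem ENNReal.le_of_forall_nat_mul_le_add {a b c : ℝ≥0∞} (ha : a ≠ ∞)
    (h : ∀ n : ℕ, n * c ≤ a + n * b) : c ≤ b := by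
  by_contra! hbc
  obtain ⟨n, hn⟩ := ENNReal.exists_nat_mul_gt (tsub_pos_of_lt hbc).ne' ha
  have : (n : ℝ≥0∞) * (c - b) ≤ a := by
    rw [ENNReal.mul_sub fun _ _ => ENNReal.natCast_ne_top n, tsub_le_iff_left, add_comm]
    exact h n
  exact (hn.trans_le this).false

section Packing

variable {G : Type*} [AddCommGroup G] {W : Set G} {v : G}

theorem pairwise_disjoint_nsmul_vadd_diff_vadd
    (hW : ∀ q ∈ W, ∀ m : ℕ, 0 < m → -(m • v) + q ∈ W → -v + q ∈ W) :
    Pairwise fun l l' : ℕ => Disjoint (l • v +ᵥ (W \ (v +ᵥ W))) (l' • v +ᵥ (W \ (v +ᵥ W))) := by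
  intro l l' hne
  wlog hll : l < l' generalizing l l'
  · exact (this hne.symm (lt_of_le_of_ne (not_lt.mp hll) hne.symm)).symm
  rw [Set.disjoint_left]
  rintro _ ⟨p, hp, rfl⟩ ⟨p', hp', hpp⟩
  simp only [vadd_eq_add] at hpp
  refine hp.2 (mem_vadd_set_iff_neg_vadd_mem.mpr (hW p hp.1 (l' - l) (Nat.sub_pos_of_lt hll) ?_))
  have hp'_eq : p' = l • v + p - l' • v := by rw [← hpp]; abel
  convert hp'.1 using 1
  rw [sub_nsmul v hll.le, hp'_eq]
  abel

variable [MeasurableSpace G] [MeasurableAdd G] {μ : Measure G} [μ.IsAddLeftInvariant]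

theorem measure_diff_vadd_le (hWm : MeasurableSet W)
    (hW : ∀ q ∈ W, ∀ m : ℕ, 0 < m → -(m • v) + q ∈ W → -v + q ∈ W)
    {B : ℕ → Set G} (hB : ∀ M, ∀ l ≤ M, l • v +ᵥ W ⊆ B M) {a b : ℝ≥0∞} (ha : a ≠ ∞)
    (hμB : ∀ M : ℕ, μ (B M) ≤ a + M * b) :
    μ (W \ (v +ᵥ W)) ≤ b := by
  have hP : MeasurableSet (W \ (v +ᵥ W)) := hWm.diff (hWm.const_vadd v)
  refine ENNReal.le_of_forall_nat_mul_le_add ha fun M => ?_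
  calc (M : ℝ≥0∞) * μ (W \ (v +ᵥ W))
      ≤ ∑ l ∈ Finset.range (M + 1), μ (l • v +ᵥ (W \ (v +ᵥ W))) := by
        simp only [measure_vadd, Finset.sum_const, Finset.card_range, nsmul_eq_mul]
        gcongr
        simp
    _ = μ (⋃ l ∈ Finset.range (M + 1), l • v +ᵥ (W \ (v +ᵥ W))) :=
        (measure_biUnion_finset ((pairwise_disjoint_nsmul_vadd_diff_vadd hW).set_pairwise _)
          fun l _ => hP.const_vadd _).symm
    _ ≤ μ (B M) := measure_mono <| iUnion₂_subset fun l hl =>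
        (vadd_set_mono sdiff_subset).trans
          (hB M l (Nat.lt_succ_iff.mp (Finset.mem_range.mp hl)))
    _ ≤ a + M * b := hμB M

end Packing

namespace ParallelSet

variable {ι : Type*}

local notation "𝐞" k:max => EuclideanSpace.single k (1 : ℝ)

def box (c : EuclideanSpace ℝ ι) (s : ι → ℝ) : Set (EuclideanSpace ℝ ι) :=
  {p | ∀ j, |p j - c j| ≤ s j}

theorem box_eq_preimage [Fintype ι] (c : EuclideanSpace ℝ ι) (s : ι → ℝ) :
    box c s = (MeasurableEquiv.toLp 2 (ι → ℝ)).symm ⁻¹'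
      univ.pi fun j => Icc (c j - s j) (c j + s j) := by
  ext p
  simp only [box, mem_ofPred_eq, mem_preimage, mem_univ_pi, mem_Icc, abs_sub_le_iff]
  change _ ↔ ∀ j, c j - s j ≤ p j ∧ p j ≤ c j + s j
  exact forall_congr' fun j => by constructor <;> rintro ⟨h₁, h₂⟩ <;> constructor <;> linarith

theorem measurableSet_box [Fintype ι] (c : EuclideanSpace ℝ ι) (s : ι → ℝ) :
    MeasurableSet (box c s) := by
  rw [box_eq_preimage]
  exact (MeasurableEquiv.toLp 2 (ι → ℝ)).symm.measurable
    (MeasurableSet.univ_pi fun _ => measurableSet_Icc)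

theorem volume_box [Fintype ι] (c : EuclideanSpace ℝ ι) (s : ι → ℝ) :
    volume (box c s) = ∏ j, ENNReal.ofReal (2 * s j) := by
  rw [box_eq_preimage,
    (EuclideanSpace.volume_preserving_symm_measurableEquiv_toLp ι).measure_preimage
      (MeasurableSet.univ_pi fun _ => measurableSet_Icc).nullMeasurableSet,
    volume_pi_pi]
  exact Finset.prod_congr rfl fun j _ => by rw [Real.volume_Icc]; ring_nf

theorem vadd_box (a c : EuclideanSpace ℝ ι) (s : ι → ℝ) : a +ᵥ box c s = box (a + c) s := by
  ext p
  simp only [mem_vadd_set_iff_neg_vadd_mem, box, mem_ofPred_eq, vadd_eq_add, PiLp.add_apply,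
    PiLp.neg_apply]
  exact forall_congr' fun j => by ring_nf

theorem box_add_box_subset (a b : EuclideanSpace ℝ ι) (s t : ι → ℝ) :
    box a s + box b t ⊆ box (a + b) (s + t) := by
  rintro _ ⟨p, hp, q, hq, rfl⟩ j
  calc |(p + q) j - (a + b) j| = |(p j - a j) + (q j - b j)| := by
        simp only [PiLp.add_apply]; ring_nf
    _ ≤ |p j - a j| + |q j - b j| := abs_add_le _ _
    _ ≤ s j + t j := add_le_add (hp j) (hq j)

theorem smul_vadd_box_subset {l M : ℝ} (hl : 0 ≤ l) (hlM : l ≤ M)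
    (v c : EuclideanSpace ℝ ι) (s : ι → ℝ) :
    l • v +ᵥ box c s ⊆ box (c + (M / 2) • v) fun j => s j + M / 2 * |v j| := by
  rw [vadd_box]
  intro p hp j
  have hlv : |(l - M / 2) * v j| ≤ M / 2 * |v j| := by
    rw [abs_mul]
    gcongr
    rw [abs_le]; constructor <;> linarith
  calc |p j - (c + (M / 2) • v) j| = |(p j - (l • v + c) j) + (l - M / 2) * v j| := by
        simp only [PiLp.add_apply, PiLp.smul_apply, smul_eq_mul]; ring_nf
    _ ≤ s j + M / 2 * |v j| := (abs_add_le _ _).trans (add_le_add (hp j) hlv)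

variable {α : Type*}

def boxUnion (x : α → EuclideanSpace ℝ ι) (s : ι → ℝ) : Set (EuclideanSpace ℝ ι) :=
  ⋃ i, box (x i) s

variable {x : α → EuclideanSpace ℝ ι} {c : EuclideanSpace ℝ ι} {s : ι → ℝ}

theorem measurableSet_boxUnion [Fintype ι] [Countable α] : MeasurableSet (boxUnion x s) :=
  MeasurableSet.iUnion fun _ => measurableSet_box _ _

theorem boxUnion_subset_box {r R : ℝ} (hx : ∀ i, x i ∈ box c fun _ => r) (hs : ∀ j, s j ≤ R) :
    boxUnion x s ⊆ box c fun _ => r + R := by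
  intro p hp j
  obtain ⟨i, hi⟩ := mem_iUnion.mp hp
  calc |p j - c j| ≤ |p j - x i j| + |x i j - c j| := abs_sub_le _ _ _
    _ ≤ r + R := by linarith [hi j, hs j, hx i j]

theorem range_add_box_zero (x : α → EuclideanSpace ℝ ι) (s : ι → ℝ) :
    range x + box 0 s = boxUnion x s := by
  ext p
  simp only [Set.mem_add, boxUnion, mem_iUnion]
  constructor
  · rintro ⟨_, ⟨i, rfl⟩, q, hq, rfl⟩
    exact ⟨i, by simpa [box] using hq⟩
  · rintro ⟨i, hi⟩
    exact ⟨x i, ⟨i, rfl⟩, p - x i, by simpa [box] using hi, add_sub_cancel _ _⟩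

variable [DecidableEq ι] {k : ι}

theorem add_smul_single_mem_box {p : EuclideanSpace ℝ ι} {t : ℝ} :
    p + t • 𝐞 k ∈ box c s ↔
      |p k + t - c k| ≤ s k ∧ ∀ j ≠ k, |p j - c j| ≤ s j := by
  simp only [box, mem_ofPred_eq]
  constructor
  · intro h
    exact ⟨by simpa using h k, fun j hj => by simpa [hj] using h j⟩
  · rintro ⟨hk, hj⟩ j
    by_cases h : j = k
    · subst h; simpa using hk
    · simpa [h] using hj j h

theorem mem_box_iff_coord {p : EuclideanSpace ℝ ι} (k : ι) :
    p ∈ box c s ↔ |p k - c k| ≤ s k ∧ ∀ j ≠ k, |p j - c j| ≤ s j := by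
  simpa using add_smul_single_mem_box (p := p) (c := c) (s := s) (k := k) (t := 0)

/-- The slices of the boxes along the line all contain the parameter where the line crosses the
hyperplane `{q | q k = c k}`, so their union is an interval. -/
theorem ordConnected_boxUnion_slice (hx : ∀ i, |x i k - c k| ≤ s k) (p : EuclideanSpace ℝ ι) :
    OrdConnected {t : ℝ | p + t • 𝐞 k ∈ boxUnion x s} := by
  refine ⟨fun a ha b hb t ⟨hat, htb⟩ => ?_⟩
  obtain ⟨i, hi⟩ := mem_iUnion.mp ha
  obtain ⟨j, hj⟩ := mem_iUnion.mp hb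
  rw [add_smul_single_mem_box] at hi hj
  have hxi := abs_le.mp (hx i)
  have hxj := abs_le.mp (hx j)
  have hai := abs_le.mp hi.1
  have hbj := abs_le.mp hj.1
  refine mem_iUnion.mpr ?_
  by_cases hpt : p k + t ≤ c k
  · exact ⟨i, add_smul_single_mem_box.mpr ⟨abs_le.mpr ⟨by linarith, by linarith⟩, hi.2⟩⟩
  · exact ⟨j, add_smul_single_mem_box.mpr ⟨abs_le.mpr ⟨by linarith, by linarith⟩, hj.2⟩⟩

theorem mem_boxUnion_of_sub_of_add (hx : ∀ i, |x i k - c k| ≤ s k) {p : EuclideanSpace ℝ ι}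
    {δ : ℝ} (hm : p + (-δ) • 𝐞 k ∈ boxUnion x (Function.update s k (s k + δ)))
    (hp : p + δ • 𝐞 k ∈ boxUnion x (Function.update s k (s k + δ))) :
    p ∈ boxUnion x s := by
  obtain ⟨i, hi⟩ := mem_iUnion.mp hm
  obtain ⟨j, hj⟩ := mem_iUnion.mp hp
  rw [add_smul_single_mem_box, Function.update_self] at hi hj
  have hxi := abs_le.mp (hx i)
  have hxj := abs_le.mp (hx j)
  have hmi := abs_le.mp hi.1
  have hpj := abs_le.mp hj.1
  refine mem_iUnion.mpr ?_
  by_cases hpc : c k ≤ p k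
  · refine ⟨j, (mem_box_iff_coord k).mpr ⟨abs_le.mpr ⟨by linarith, by linarith⟩, ?_⟩⟩
    exact fun l hl => Function.update_of_ne hl _ s ▸ hj.2 l hl
  · refine ⟨i, (mem_box_iff_coord k).mpr ⟨abs_le.mpr ⟨by linarith, by linarith⟩, ?_⟩⟩
    exact fun l hl => Function.update_of_ne hl _ s ▸ hi.2 l hl

theorem boxUnion_update_subset (hx : ∀ i, |x i k - c k| ≤ s k) (δ : ℝ) :
    boxUnion x (Function.update s k (s k + δ)) ⊆ boxUnion x s
      ∪ (boxUnion x (Function.update s k (s k + δ)) \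
          (δ • 𝐞 k +ᵥ boxUnion x (Function.update s k (s k + δ))))
      ∪ (boxUnion x (Function.update s k (s k + δ)) \
          ((-δ) • 𝐞 k +ᵥ boxUnion x (Function.update s k (s k + δ)))) := by
  intro p hp
  simp only [mem_union, Set.mem_sdiff, mem_vadd_set_iff_neg_vadd_mem, vadd_eq_add, neg_smul,
    neg_neg]
  by_cases hm : p + (-δ) • 𝐞 k ∈ boxUnion x (Function.update s k (s k + δ))
  · by_cases hp' : p + δ • 𝐞 k ∈ boxUnion x (Function.update s k (s k + δ))
    · exact Or.inl (Or.inl (mem_boxUnion_of_sub_of_add hx hm hp'))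
    · exact Or.inr ⟨hp, by rwa [add_comm _ p]⟩
  · exact Or.inl (Or.inr ⟨hp, by rwa [add_comm _ p, ← neg_smul]⟩)

variable [Fintype ι]

theorem volume_box_add_smul_single (c : EuclideanSpace ℝ ι) (S M t : ℝ) (k : ι) :
    volume (box c fun j => S + M / 2 * |(t • 𝐞 k) j|) =
      ENNReal.ofReal (2 * S + M * |t|) * ENNReal.ofReal (2 * S) ^ (Fintype.card ι - 1) := by
  rw [volume_box, Fintype.prod_eq_mul_prod_compl k]
  congr 1
  · simp only [PiLp.smul_apply, PiLp.single_apply, if_pos, smul_eq_mul, mul_one]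
    ring_nf
  · rw [Finset.prod_congr rfl fun j hj => ?_, Finset.prod_const, Finset.card_compl,
      Finset.card_singleton]
    rw [Finset.mem_compl, Finset.mem_singleton] at hj
    simp [hj]

theorem volume_boxUnion_diff_vadd_le [Countable α] (hx : ∀ i, |x i k - c k| ≤ s k) {S : ℝ}
    (hW : boxUnion x s ⊆ box c fun _ => S) (t : ℝ) :
    volume (boxUnion x s \ (t • 𝐞 k +ᵥ boxUnion x s)) ≤
      ENNReal.ofReal |t| * ENNReal.ofReal (2 * S) ^ (Fintype.card ι - 1) := by
  refine measure_diff_vadd_le measurableSet_boxUnion ?_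
    (B := fun M => box (c + ((M : ℝ) / 2) • t • 𝐞 k) fun j => S + M / 2 * |(t • 𝐞 k) j|)
    (fun M l hl => ?_) (a := ENNReal.ofReal (2 * S) * ENNReal.ofReal (2 * S) ^ (Fintype.card ι - 1))
    (by finiteness) fun M => ?_
  · intro q hq m hm hqm
    have hm' : (1 : ℝ) ≤ m := Nat.one_le_cast.mpr hm
    have hmem : -t ∈ uIcc 0 (-(m * t)) := by
      rw [mem_uIcc]
      rcases le_total 0 t with ht | ht
      · exact Or.inr ⟨by nlinarith, by linarith⟩
      · exact Or.inl ⟨by linarith, by nlinarith⟩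
    have := (ordConnected_boxUnion_slice hx q).uIcc_subset (by simpa using hq)
      (by rw [mem_ofPred_eq]; convert hqm using 1; module) hmem
    rw [mem_ofPred_eq] at this
    convert this using 1
    module
  · rw [← Nat.cast_smul_eq_nsmul ℝ]
    exact (vadd_set_mono hW).trans
      (smul_vadd_box_subset (by positivity) (by exact_mod_cast hl) _ _ _)
  · rw [volume_box_add_smul_single]
    calc ENNReal.ofReal (2 * S + M * |t|) * ENNReal.ofReal (2 * S) ^ (Fintype.card ι - 1)
        ≤ (ENNReal.ofReal (2 * S) + M * ENNReal.ofReal |t|) *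
            ENNReal.ofReal (2 * S) ^ (Fintype.card ι - 1) := by
          gcongr
          rw [← ENNReal.ofReal_natCast, ← ENNReal.ofReal_mul (by positivity)]
          exact ENNReal.ofReal_add_le
      _ = _ := by ring

theorem volume_boxUnion_update_le [Countable α] {r δ : ℝ} (hδ : 0 ≤ δ)
    (hx : ∀ i, x i ∈ box c fun _ => r) (hsk : s k = r) (hs : ∀ j, s j ≤ r + δ) :
    volume (boxUnion x (Function.update s k (r + δ))) ≤ volume (boxUnion x s) +
      2 * (ENNReal.ofReal δ * ENNReal.ofReal (4 * r + 2 * δ) ^ (Fintype.card ι - 1)) := by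
  subst hsk
  have hxk : ∀ i, |x i k - c k| ≤ s k := fun i => hx i k
  have hW : boxUnion x (Function.update s k (s k + δ)) ⊆ box c fun _ => s k + (s k + δ) :=
    boxUnion_subset_box hx fun j => by
      rcases eq_or_ne j k with rfl | hj
      · simp
      · simpa [hj] using hs j
  have hside : ∀ t, |t| = δ →
      volume (boxUnion x (Function.update s k (s k + δ)) \
          (t • 𝐞 k +ᵥ boxUnion x (Function.update s k (s k + δ)))) ≤
        ENNReal.ofReal δ * ENNReal.ofReal (4 * s k + 2 * δ) ^ (Fintype.card ι - 1) := by
    intro t ht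
    convert volume_boxUnion_diff_vadd_le
      (fun i => (hxk i).trans (by rw [Function.update_self]; linarith))
      hW t using 4
    · rw [ht]
    · ring
  calc volume (boxUnion x (Function.update s k (s k + δ)))
      ≤ volume (boxUnion x s) + _ + _ :=
        (measure_mono (boxUnion_update_subset hxk δ)).trans <|
          (measure_union_le _ _).trans (add_le_add_left (measure_union_le _ _) _)
    _ ≤ volume (boxUnion x s) +
          ENNReal.ofReal δ * ENNReal.ofReal (4 * s k + 2 * δ) ^ (Fintype.card ι - 1) +
          ENNReal.ofReal δ * ENNReal.ofReal (4 * s k + 2 * δ) ^ (Fintype.card ι - 1) := by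
        gcongr
        · exact hside δ (abs_of_nonneg hδ)
        · exact hside (-δ) (by rw [abs_neg, abs_of_nonneg hδ])
    _ = _ := by ring

def padRadius (r δ : ℝ) (T : Finset ι) (j : ι) : ℝ :=
  if j ∈ T then r + δ else r

theorem volume_boxUnion_padRadius_le [Countable α] {r δ : ℝ} (hδ : 0 ≤ δ)
    (hx : ∀ i, x i ∈ box c fun _ => r) (T : Finset ι) :
    volume (boxUnion x (padRadius r δ T)) ≤ volume (boxUnion x fun _ => r) + T.card *
      (2 * (ENNReal.ofReal δ * ENNReal.ofReal (4 * r + 2 * δ) ^ (Fintype.card ι - 1))) := by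
  induction T using Finset.induction_on with
  | empty =>
    rw [show padRadius r δ ∅ = fun _ => r from funext fun _ => if_neg (Finset.notMem_empty _)]
    simp
  | insert k T hk ih =>
    have hpad : padRadius r δ (insert k T) = Function.update (padRadius r δ T) k (r + δ) := by
      ext j
      rcases eq_or_ne j k with rfl | hj <;> simp [padRadius, *]
    rw [hpad, Finset.card_insert_of_notMem hk]
    calc _ ≤ volume (boxUnion x (padRadius r δ T)) +
          2 * (ENNReal.ofReal δ * ENNReal.ofReal (4 * r + 2 * δ) ^ (Fintype.card ι - 1)) :=
        volume_boxUnion_update_le hδ hx (by simp [padRadius, hk])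
          fun j => by unfold padRadius; split_ifs <;> linarith
      _ ≤ _ := by
        rw [Nat.cast_add_one, add_one_mul, ← add_assoc]
        gcongr

theorem volume_range_add_box_add_box_le [Countable α] {r δ : ℝ} (hδ : 0 ≤ δ)
    (hx : ∀ i, x i ∈ box c fun _ => r) :
    volume (range x + (box 0 fun _ => r) + box 0 fun _ => δ) ≤
      volume (range x + box 0 fun _ => r) + Fintype.card ι *
        (2 * (ENNReal.ofReal δ * ENNReal.ofReal (4 * r + 2 * δ) ^ (Fintype.card ι - 1))) := by
  have hpad : padRadius (ι := ι) r δ Finset.univ = (fun _ => r) + fun _ => δ := by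
    ext j
    simp [padRadius]
  calc volume (range x + (box 0 fun _ => r) + box 0 fun _ => δ)
      ≤ volume (boxUnion x (padRadius r δ Finset.univ)) := by
        rw [add_assoc, hpad, ← range_add_box_zero]
        exact measure_mono <| add_subset_add_left <|
          (box_add_box_subset 0 0 _ _).trans_eq (by rw [zero_add])
    _ ≤ _ := by
        rw [range_add_box_zero]
        exact volume_boxUnion_padRadius_le hδ hx Finset.univ

theorem smul_unitCube {d : ℕ} {a : ℝ} (ha : 0 < a) : a • unitCube d = box 0 fun _ => a := by
  ext p
  rw [mem_smul_set_iff_inv_smul_mem₀ ha.ne']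
  simp only [unitCube, box, mem_ofPred_eq, PiLp.smul_apply, smul_eq_mul, PiLp.zero_apply,
    sub_zero, abs_mul, abs_inv, abs_of_pos ha, inv_mul_le_iff₀ ha, mul_one]

end ParallelSet

theorem unitBall_subset_unitCube (d : ℕ) : unitBall d ⊆ unitCube d := fun p hp j =>
  (PiLp.norm_apply_le p j).trans (by simpa [unitBall] using hp)

theorem upperSurf_mono {d : ℕ} {K K' : Set (EuclideanSpace ℝ (Fin d))} (h : K ⊆ K')
    (A : Set (EuclideanSpace ℝ (Fin d))) : upperSurf K A ≤ upperSurf K' A :=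
  limsup_le_limsup <| Eventually.of_forall fun δ => by
    dsimp only
    gcongr

theorem upperSurf_le_of_volume_add_smul_le {d : ℕ} {K A : Set (EuclideanSpace ℝ (Fin d))}
    {f : ℝ → ℝ} (hf : ContinuousAt f 0)
    (h : ∀ δ > 0, volume (A + δ • K) ≤ volume A + ENNReal.ofReal (f δ) * ENNReal.ofReal δ) :
    upperSurf K A ≤ ENNReal.ofReal (f 0) := by
  have hbound : ∀ᶠ δ in 𝓝[>] 0,
      (volume (A + δ • K) - volume A) / ENNReal.ofReal δ ≤ ENNReal.ofReal (f δ) := by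
    filter_upwards [self_mem_nhdsWithin] with δ (hδ : 0 < δ)
    rw [ENNReal.div_le_iff (by simpa using hδ) ENNReal.ofReal_ne_top, tsub_le_iff_left]
    exact h δ hδ
  have hlim : Tendsto (fun δ => ENNReal.ofReal (f δ)) (𝓝[>] 0) (𝓝 (ENNReal.ofReal (f 0))) :=
    (ENNReal.continuous_ofReal.continuousAt.comp hf).tendsto.mono_left nhdsWithin_le_nhds
  exact (limsup_le_limsup hbound).trans hlim.limsup_eq.le

theorem upperSurf_cube_parallel_set_le_general
    (d : ℕ) (r : ℝ) (hr : 0 < r) (N : ℕ)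
    (x : Fin (N + 1) → EuclideanSpace ℝ (Fin d))
    (hx : ∀ i j, |x i j - x 0 j| ≤ r) :
    upperSurf (unitCube d) (Set.range x + r • unitCube d) ≤
        ENNReal.ofReal (2 * d * (4 * r) ^ (d - 1)) ∧
    upperSurf (unitBall d) (Set.range x + r • unitCube d) ≤
        ENNReal.ofReal (2 * d * (4 * r) ^ (d - 1)) := by
  have hstep : ∀ δ > 0, volume (Set.range x + r • unitCube d + δ • unitCube d) ≤
      volume (Set.range x + r • unitCube d) +
        ENNReal.ofReal (2 * d * (4 * r + 2 * δ) ^ (d - 1)) * ENNReal.ofReal δ := by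
    intro δ hδ
    rw [ParallelSet.smul_unitCube hr, ParallelSet.smul_unitCube hδ]
    refine (ParallelSet.volume_range_add_box_add_box_le hδ.le hx).trans_eq ?_
    rw [Fintype.card_fin, ENNReal.ofReal_mul (by positivity), ENNReal.ofReal_mul (by positivity),
      ENNReal.ofReal_pow (by positivity), ENNReal.ofReal_natCast, ENNReal.ofReal_ofNat]
    ring
  have hcube := upperSurf_le_of_volume_add_smul_le (by fun_prop) hstep
  simp only [mul_zero, add_zero] at hcube
  exact ⟨hcube, (upperSurf_mono (unitBall_subset_unitCube d) _).trans hcube⟩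

/-- For `d ≥ 1`, `r > 0`, `N ≥ 1` and points `x_0, …, x_N ∈ ℝ^d` with
`‖x_i − x_0‖_∞ ≤ r`, both the upper `C`-surface area and the upper (Euclidean) surface
area of `A_{⊞r}` (where `A = {x_0, …, x_N}`) are at most `2d(4r)^{d−1}`. -/
theorem upperSurf_cube_parallel_set_le
    (d : ℕ) (hd : 1 ≤ d) (r : ℝ) (hr : 0 < r) (N : ℕ) (hN : 1 ≤ N)
    (x : Fin (N + 1) → EuclideanSpace ℝ (Fin d))
    (hx : ∀ i j, |x i j - x 0 j| ≤ r) :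
    upperSurf (unitCube d) (Set.range x + r • unitCube d) ≤
        ENNReal.ofReal (2 * d * (4 * r) ^ (d - 1)) ∧
    upperSurf (unitBall d) (Set.range x + r • unitCube d) ≤
        ENNReal.ofReal (2 * d * (4 * r) ^ (d - 1)) :=
  upperSurf_cube_parallel_set_le_general d r hr N x hx
end

section
/- Let d ≥ 2, r > 0, δ > 0, and let A = {x_1, …, x_N} be a nonempty finite set of points in ℝ^d. Then λ(A_{⊕(r+δ)} \ A_{⊕r}) ≤ N_B(A; r) · 2^{d−1} ω_d ((r+δ)^d − r^d), where N_B(A; r) is the r-packing number of A with respect to the ℓ² metric. -/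
open MeasureTheory Set Filter
open scoped ENNReal Pointwise

/-- `ω_d = π^{d/2}/Γ(1+d/2)`, the volume of the unit Euclidean ball in `ℝ^d`. -/
noncomputable def omegaVol (d : ℕ) : ℝ := Real.pi ^ ((d : ℝ) / 2) / Real.Gamma (1 + (d : ℝ) / 2)

/-- The `ε`-packing number of `A` with respect to the metric `dist'`: the maximal
cardinality of a subset of `A` whose points have pairwise distances `> ε`. -/
noncomputable def packingNum {d : ℕ}
    (dist' : EuclideanSpace ℝ (Fin d) → EuclideanSpace ℝ (Fin d) → ℝ)
    (A : Set (EuclideanSpace ℝ (Fin d))) (ε : ℝ) : ℕ :=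
  sSup {n : ℕ | ∃ S : Finset (EuclideanSpace ℝ (Fin d)), ↑S ⊆ A ∧ S.card = n ∧
    ∀ x ∈ S, ∀ y ∈ S, x ≠ y → ε < dist' x y}

/-! Take a maximal `r`-packing `P` of `A`. By maximality the clusters `A ∩ B(p, r)`, `p ∈ P`,
cover `A`, so the shell `A_{⊕(r+δ)} \ A_{⊕r}` is covered by the shells of the clusters, and it
suffices to bound the shell of one cluster `K ⊆ B(p, r)` by `2^{d-1} ω_d ((r+δ)^d - r^d)`.

In polar coordinates around `p`, the shell of `K` meets the ray in direction `θ` inside an interval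
`(ρ₁, ρ₂]`: choose `a ∈ K` whose ball `B(a, r+δ)` reaches farthest along the ray, and let `ρ₂`, `ρ₁`
be the exit radii of the ray from `B(a, r+δ)` and `B(a, r)`. These radii are explicit,
`⟪θ, a - p⟫ + √(t² - dist(a - p, ℝθ)²)`, and convexity of `x ↦ x^d` and `u ↦ u^{d/2}` gives
`ρ₂^d - ρ₁^d ≤ 2^{d-1}((r+δ)^d - r^d)`; integrating `(ρ₂^d - ρ₁^d)/d` over the sphere, whose
area is `d ω_d`, gives the bound. -/

theorem ConvexOn.map_add_sub_map_le {𝕜 : Type*} [Field 𝕜] [LinearOrder 𝕜]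
    [IsStrictOrderedRing 𝕜] {D : Set 𝕜} {f : 𝕜 → 𝕜} (hf : ConvexOn 𝕜 D f) {x y s : 𝕜}
    (hx : x ∈ D) (hys : y + s ∈ D) (hxy : x ≤ y) (hs : 0 ≤ s) :
    f (x + s) - f x ≤ f (y + s) - f y := by
  rcases hxy.eq_or_lt with rfl | hxy
  · rfl
  rcases hs.eq_or_lt with rfl | hs
  · simp
  have h₁ := hf.secant_mono_aux1 hx hys (lt_add_of_pos_right x hs) (by linarith)
  have h₂ := hf.secant_mono_aux1 hx hys hxy (lt_add_of_pos_right y hs)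
  have hpos : 0 < y + s - x := by linarith
  refine le_of_mul_le_mul_left ?_ hpos
  linear_combination h₁ + h₂

theorem add_sqrt_pow_sub_add_sqrt_pow_le {n : ℕ} (hn : 2 ≤ n) {α m r R : ℝ} (hα : |α| ≤ m)
    (hm : m ≤ r) (hrR : r ≤ R) :
    (α + √(R ^ 2 - (m ^ 2 - α ^ 2))) ^ n - (α + √(r ^ 2 - (m ^ 2 - α ^ 2))) ^ n ≤
      2 ^ (n - 1) * (R ^ n - r ^ n) := by
  set γ := √(r ^ 2 - (m ^ 2 - α ^ 2))
  set h := √(R ^ 2 - (m ^ 2 - α ^ 2))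
  have hm₀ : 0 ≤ m := (abs_nonneg α).trans hα
  have hmr : m ^ 2 ≤ r ^ 2 := pow_le_pow_left₀ hm₀ hm 2
  have hrR' : r ^ 2 ≤ R ^ 2 := pow_le_pow_left₀ (hm₀.trans hm) hrR 2
  have hαm : α ^ 2 ≤ m ^ 2 := sq_le_sq.2 (by rwa [abs_of_nonneg hm₀])
  have hγ₀ : 0 ≤ γ := Real.sqrt_nonneg _
  have hγ : γ ^ 2 = r ^ 2 - (m ^ 2 - α ^ 2) := Real.sq_sqrt (by linarith [sq_nonneg α])
  have hh : h ^ 2 = R ^ 2 - (m ^ 2 - α ^ 2) := Real.sq_sqrt (by linarith [sq_nonneg α])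
  have hαγ : |α| ≤ γ := Real.abs_le_sqrt (by linarith)
  have hγh : γ ≤ h := Real.sqrt_le_sqrt (by linarith)
  -- increments of the convex `x ↦ x ^ n` grow when `[α + γ, α + h]` is moved right to `[2γ, γ + h]`
  have shift : (α + h) ^ n - (α + γ) ^ n ≤ (γ + h) ^ n - (γ + γ) ^ n := by
    have := (convexOn_pow n).map_add_sub_map_le (x := α + γ) (y := γ + γ) (s := h - γ)
      (by simp only [Set.mem_Ici]; linarith [neg_abs_le α])
      (by simp only [Set.mem_Ici]; linarith) (by linarith [le_abs_self α]) (by linarith)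
    rwa [add_add_sub_cancel, add_add_sub_cancel] at this
  have mean : (γ + h) ^ n - (γ + γ) ^ n ≤ 2 ^ (n - 1) * (h ^ n - γ ^ n) := by
    have hpow := add_pow_le hγ₀ (hγ₀.trans hγh) n
    have hdouble : (γ + γ) ^ n = 2 * 2 ^ (n - 1) * γ ^ n := by
      rw [← two_mul, mul_pow, ← pow_succ', Nat.sub_add_cancel (by omega)]
    rw [hdouble]
    linarith
  -- `h² - γ² = R² - r²` and `γ² ≤ r²`: the same argument for the convex `u ↦ u ^ (n / 2)`
  have radial : h ^ n - γ ^ n ≤ R ^ n - r ^ n := by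
    have hconv : ConvexOn ℝ (Set.Ici 0) fun u : ℝ => u ^ ((n : ℝ) / 2) :=
      convexOn_rpow (by rw [le_div_iff₀ two_pos]; exact_mod_cast hn)
    have key := hconv.map_add_sub_map_le (x := γ ^ 2) (y := r ^ 2) (s := R ^ 2 - r ^ 2)
      (sq_nonneg γ) (by simp only [Set.mem_Ici]; linarith [sq_nonneg r]) (by linarith)
      (by linarith)
    have hsq : ∀ u : ℝ, 0 ≤ u → (u ^ 2) ^ ((n : ℝ) / 2) = u ^ n := fun u hu => by
      rw [← Real.rpow_natCast u 2, ← Real.rpow_mul hu, Nat.cast_ofNat,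
        mul_div_cancel₀ _ two_ne_zero, Real.rpow_natCast]
    rwa [show γ ^ 2 + (R ^ 2 - r ^ 2) = h ^ 2 by linarith, add_sub_cancel, hsq γ hγ₀,
      hsq h (hγ₀.trans hγh), hsq r (hm₀.trans hm), hsq R (hm₀.trans (hm.trans hrR))] at key
  calc _ ≤ _ := shift
    _ ≤ _ := mean
    _ ≤ _ := by gcongr

section Ray

open scoped RealInnerProductSpace

variable {E : Type*} [NormedAddCommGroup E] [InnerProductSpace ℝ E]

noncomputable def rayExit (v θ : E) (t : ℝ) : ℝ :=
  ⟪θ, v⟫ + √(t ^ 2 - (‖v‖ ^ 2 - ⟪θ, v⟫ ^ 2))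

lemma abs_inner_le_sqrt_sq_sub {v θ : E} {t : ℝ} (hv : ‖v‖ ≤ t) :
    |⟪θ, v⟫| ≤ √(t ^ 2 - (‖v‖ ^ 2 - ⟪θ, v⟫ ^ 2)) :=
  Real.abs_le_sqrt (by nlinarith [norm_nonneg v])

lemma rayExit_nonneg {v θ : E} {t : ℝ} (hv : ‖v‖ ≤ t) : 0 ≤ rayExit v θ t := by
  unfold rayExit
  linarith [neg_abs_le ⟪θ, v⟫, abs_inner_le_sqrt_sq_sub (θ := θ) hv]

lemma rayExit_mono {v θ : E} {t t' : ℝ} (hv : ‖v‖ ≤ t) (htt' : t ≤ t') :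
    rayExit v θ t ≤ rayExit v θ t' := by
  have : t ^ 2 ≤ t' ^ 2 := pow_le_pow_left₀ ((norm_nonneg v).trans hv) htt' 2
  unfold rayExit
  gcongr

lemma norm_smul_sub_le_iff_le_rayExit {v θ : E} {s t : ℝ} (hθ : ‖θ‖ = 1) (hv : ‖v‖ ≤ t)
    (hs : 0 ≤ s) : ‖s • θ - v‖ ≤ t ↔ s ≤ rayExit v θ t := by
  have hnorm : ‖s • θ - v‖ ^ 2 = (s - ⟪θ, v⟫) ^ 2 + (‖v‖ ^ 2 - ⟪θ, v⟫ ^ 2) := by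
    rw [norm_sub_sq_real, norm_smul, real_inner_smul_left, hθ, Real.norm_eq_abs, mul_one, sq_abs]
    ring
  have hexit := abs_inner_le_sqrt_sq_sub (θ := θ) hv
  have hD : 0 ≤ t ^ 2 - (‖v‖ ^ 2 - ⟪θ, v⟫ ^ 2) := by nlinarith [norm_nonneg v, sq_nonneg ⟪θ, v⟫]
  rw [← sq_le_sq₀ (norm_nonneg _) ((norm_nonneg v).trans hv), hnorm, ← le_sub_iff_add_le,
    Real.sq_le hD, rayExit]
  constructor
  · rintro ⟨-, h⟩
    linarith
  · intro h
    constructor <;> linarith [le_abs_self ⟪θ, v⟫]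

lemma rayExit_pow_sub_rayExit_pow_le {v θ : E} {r R : ℝ} {n : ℕ} (hn : 2 ≤ n) (hθ : ‖θ‖ = 1)
    (hv : ‖v‖ ≤ r) (hrR : r ≤ R) :
    rayExit v θ R ^ n - rayExit v θ r ^ n ≤ 2 ^ (n - 1) * (R ^ n - r ^ n) :=
  add_sqrt_pow_sub_add_sqrt_pow_le hn
    (by simpa [hθ] using abs_real_inner_le_norm θ v) hv hrR

end Ray

section Polar

open MeasureTheory Measure Module Metric

lemma volumeIoiPow_preimage_Ioc (n : ℕ) {a b : ℝ} (ha : 0 ≤ a) (hab : a ≤ b) :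
    volumeIoiPow n (Subtype.val ⁻¹' Ioc a b) =
      ENNReal.ofReal ((b ^ (n + 1) - a ^ (n + 1)) / (n + 1)) := by
  rw [volumeIoiPow, withDensity_apply _ (measurableSet_Ioc.preimage measurable_subtype_coe),
    setLIntegral_subtype measurableSet_Ioi _ fun x : ℝ => ENNReal.ofReal (x ^ n),
    Subtype.image_preimage_coe, inter_eq_right.2 (Ioc_subset_Ioi_self.trans (Ioi_subset_Ioi ha)),
    ← ofReal_integral_eq_lintegral_ofReal (intervalIntegral.intervalIntegrable_pow n).1,
    ← intervalIntegral.integral_of_le hab, integral_pow]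
  filter_upwards [ae_restrict_mem measurableSet_Ioc] with x hx
  exact pow_nonneg (ha.trans hx.1.le) n

variable {E : Type*} [NormedAddCommGroup E] [NormedSpace ℝ E] [FiniteDimensional ℝ E]
  [Nontrivial E] [MeasurableSpace E] [BorelSpace E] (μ : Measure E) [μ.IsAddHaarMeasure]

theorem measure_le_of_forall_ray_subset_Ioc {T : Set E} (hT : MeasurableSet T) (p : E) {C : ℝ}
    (hray : ∀ θ ∈ sphere (0 : E) 1, ∃ ρ₁ ρ₂, 0 ≤ ρ₁ ∧ ρ₁ ≤ ρ₂ ∧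
      ρ₂ ^ finrank ℝ E - ρ₁ ^ finrank ℝ E ≤ C ∧ {s : ℝ | 0 < s ∧ p + s • θ ∈ T} ⊆ Ioc ρ₁ ρ₂) :
    μ T ≤ ENNReal.ofReal C * μ (ball 0 1) := by
  set n := finrank ℝ E
  have hn : 0 < n := finrank_pos
  set T' : Set E := (p + ·) ⁻¹' T
  set S := (homeomorphUnitSphereProd E).symm ⁻¹' (Subtype.val ⁻¹' T')
  have hS : MeasurableSet S :=
    ((hT.preimage (measurable_const_add p)).preimage measurable_subtype_coe).preimage
      (homeomorphUnitSphereProd E).symm.measurable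
  have hpolar : μ T = μ.toSphere.prod (volumeIoiPow (n - 1)) S := by
    calc μ T = μ (T' \ {0}) := by
          rw [measure_sdiff_null (measure_singleton 0), measure_preimage_add]
      _ = μ.comap Subtype.val (Subtype.val ⁻¹' T') := by
          rw [comap_subtype_coe_apply (measurableSet_singleton 0).compl,
            Subtype.image_preimage_coe, sdiff_eq, inter_comm]
      _ = _ := by
          rw [← (μ.measurePreserving_homeomorphUnitSphereProd).measure_preimage
            hS.nullMeasurableSet]
          exact congrArg _ ((homeomorphUnitSphereProd E).toEquiv.preimage_symm_preimage _).symm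
  have hsection : ∀ θ, volumeIoiPow (n - 1) (Prod.mk θ ⁻¹' S) ≤ ENNReal.ofReal (C / n) := by
    intro θ
    obtain ⟨ρ₁, ρ₂, hρ₁, hρ₁₂, hC, hsub⟩ := hray θ θ.2
    calc volumeIoiPow (n - 1) (Prod.mk θ ⁻¹' S)
        ≤ volumeIoiPow (n - 1) (Subtype.val ⁻¹' Ioc ρ₁ ρ₂) :=
          measure_mono fun s hs => hsub ⟨s.2, by simpa [S, T'] using hs⟩
      _ = ENNReal.ofReal ((ρ₂ ^ n - ρ₁ ^ n) / n) := by
          rw [volumeIoiPow_preimage_Ioc _ hρ₁ hρ₁₂, Nat.sub_add_cancel hn, Nat.cast_pred hn,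
            sub_add_cancel]
      _ ≤ ENNReal.ofReal (C / n) := by gcongr
  calc μ T = ∫⁻ θ, volumeIoiPow (n - 1) (Prod.mk θ ⁻¹' S) ∂μ.toSphere := by
        rw [hpolar, Measure.prod_apply hS]
    _ ≤ ∫⁻ _, ENNReal.ofReal (C / n) ∂μ.toSphere := lintegral_mono hsection
    _ = ENNReal.ofReal C * μ (ball 0 1) := by
        rw [lintegral_const, toSphere_apply_univ, ← mul_assoc, ← ENNReal.ofReal_natCast,
          ← ENNReal.ofReal_mul' (Nat.cast_nonneg _), div_mul_cancel₀ _ (by positivity)]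

end Polar

section Shell

open MeasureTheory Metric Module

variable {E : Type*} [NormedAddCommGroup E]

def parallelShell (K : Set E) (r R : ℝ) : Set E :=
  (K + closedBall 0 R) \ (K + closedBall 0 r)

lemma mem_add_closedBall_zero_iff {K : Set E} {y : E} {t : ℝ} :
    y ∈ K + closedBall 0 t ↔ ∃ a ∈ K, dist y a ≤ t := by
  simp only [Set.mem_add, mem_closedBall_zero_iff, dist_eq_norm]
  constructor
  · rintro ⟨a, ha, b, hb, rfl⟩
    exact ⟨a, ha, by rwa [add_sub_cancel_left]⟩
  · rintro ⟨a, ha, h⟩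
    exact ⟨a, ha, y - a, h, add_sub_cancel a y⟩

lemma parallelShell_subset_biUnion_inter {ι : Type*} {A : Set E} {U : ι → Set E} {I : Set ι}
    (hA : A ⊆ ⋃ i ∈ I, U i) (r R : ℝ) :
    parallelShell A r R ⊆ ⋃ i ∈ I, parallelShell (A ∩ U i) r R := by
  rintro _ ⟨⟨a, ha, b, hb, rfl⟩, hout⟩
  obtain ⟨i, hi, hai⟩ := mem_iUnion₂.1 (hA ha)
  exact mem_iUnion₂.2 ⟨i, hi, add_mem_add ⟨ha, hai⟩ hb,
    fun h => hout (add_subset_add_right inter_subset_left h)⟩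

lemma Set.Finite.measurableSet_parallelShell [MeasurableSpace E] [OpensMeasurableSpace E]
    {K : Set E} (hK : K.Finite) (r R : ℝ) : MeasurableSet (parallelShell K r R) :=
  (isClosed_closedBall.add_left_of_isCompact hK.isCompact).measurableSet.diff
    (isClosed_closedBall.add_left_of_isCompact hK.isCompact).measurableSet

variable [InnerProductSpace ℝ E]

lemma exists_ray_inter_parallelShell_subset_Ioc {K : Set E} (hK : K.Finite) (hKne : K.Nonempty)
    {p : E} {r R : ℝ} (hKp : K ⊆ closedBall p r) (hrR : r ≤ R) {n : ℕ} (hn : 2 ≤ n) {θ : E}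
    (hθ : ‖θ‖ = 1) :
    ∃ ρ₁ ρ₂, 0 ≤ ρ₁ ∧ ρ₁ ≤ ρ₂ ∧ ρ₂ ^ n - ρ₁ ^ n ≤ 2 ^ (n - 1) * (R ^ n - r ^ n) ∧
      {s : ℝ | 0 < s ∧ p + s • θ ∈ parallelShell K r R} ⊆ Ioc ρ₁ ρ₂ := by
  have hr : ∀ a ∈ K, ‖a - p‖ ≤ r := fun a ha => mem_closedBall_iff_norm.1 (hKp ha)
  have hR : ∀ a ∈ K, ‖a - p‖ ≤ R := fun a ha => (hr a ha).trans hrR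
  have hray : ∀ {s t : ℝ}, 0 ≤ s → (∀ a ∈ K, ‖a - p‖ ≤ t) →
      (p + s • θ ∈ K + closedBall 0 t ↔ ∃ a ∈ K, s ≤ rayExit (a - p) θ t) := by
    intro s t hs ht
    rw [mem_add_closedBall_zero_iff]
    refine exists_congr fun a => and_congr_right fun ha => ?_
    rw [dist_eq_norm, show p + s • θ - a = s • θ - (a - p) by abel,
      norm_smul_sub_le_iff_le_rayExit hθ (ht a ha) hs]
  obtain ⟨a, ha, hmax⟩ := K.exists_max_image (fun b => rayExit (b - p) θ R) hK hKne
  refine ⟨rayExit (a - p) θ r, rayExit (a - p) θ R, rayExit_nonneg (hr a ha),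
    rayExit_mono (hr a ha) hrR, rayExit_pow_sub_rayExit_pow_le hn hθ (hr a ha) hrR, ?_⟩
  rintro s ⟨hs, hin, hout⟩
  obtain ⟨b, hb, hsb⟩ := (hray hs.le hR).1 hin
  exact ⟨lt_of_not_ge fun h => hout ((hray hs.le hr).2 ⟨a, ha, h⟩), hsb.trans (hmax b hb)⟩

variable [FiniteDimensional ℝ E] [MeasurableSpace E] [BorelSpace E] (μ : Measure E)
  [μ.IsAddHaarMeasure]

theorem measure_parallelShell_le {K : Set E} (hK : K.Finite) (hKne : K.Nonempty) {p : E}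
    {r R : ℝ} (hKp : K ⊆ closedBall p r) (hrR : r ≤ R) (hn : 2 ≤ finrank ℝ E) :
    μ (parallelShell K r R) ≤ ENNReal.ofReal
      (2 ^ (finrank ℝ E - 1) * (R ^ finrank ℝ E - r ^ finrank ℝ E)) * μ (ball 0 1) :=
  have : Nontrivial E := nontrivial_of_finrank_pos (R := ℝ) (by omega)
  measure_le_of_forall_ray_subset_Ioc μ (hK.measurableSet_parallelShell r R) p fun _ hθ =>
    exists_ray_inter_parallelShell_subset_Ioc hK hKne hKp hrR hn (mem_sphere_zero_iff_norm.1 hθ)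

end Shell

section Euclidean

open Metric

variable {d : ℕ} {A : Set (EuclideanSpace ℝ (Fin d))}

lemma volume_ball_zero_one_eq_omegaVol [NeZero d] :
    volume (ball (0 : EuclideanSpace ℝ (Fin d)) 1) = ENNReal.ofReal (omegaVol d) := by
  rw [EuclideanSpace.volume_ball, ENNReal.ofReal_one, one_pow, one_mul, Fintype.card_fin,
    omegaVol, add_comm, Real.sqrt_eq_rpow, ← Real.rpow_natCast, ← Real.rpow_mul Real.pi_pos.le,
    one_div_mul_eq_div]

lemma volume_parallelShell_le_omegaVol (hd : 2 ≤ d) {K : Set (EuclideanSpace ℝ (Fin d))}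
    (hK : K.Finite) (hKne : K.Nonempty) {p : EuclideanSpace ℝ (Fin d)} {r R : ℝ}
    (hKp : K ⊆ closedBall p r) (hrR : r ≤ R) :
    volume (parallelShell K r R) ≤ ENNReal.ofReal (2 ^ (d - 1) * omegaVol d * (R ^ d - r ^ d)) := by
  have : NeZero d := ⟨by omega⟩
  have hr : 0 ≤ r := nonempty_closedBall.1 (hKne.mono hKp)
  have hshell := measure_parallelShell_le volume hK hKne hKp hrR
    (by rwa [finrank_euclideanSpace_fin])
  rwa [finrank_euclideanSpace_fin, volume_ball_zero_one_eq_omegaVol,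
    ← ENNReal.ofReal_mul (mul_nonneg (by positivity) (sub_nonneg.2 (pow_le_pow_left₀ hr hrR d))),
    mul_right_comm] at hshell

lemma bddAbove_card_packing (hA : A.Finite) (r : ℝ) :
    BddAbove {n : ℕ | ∃ S : Finset (EuclideanSpace ℝ (Fin d)), ↑S ⊆ A ∧ S.card = n ∧
      ∀ x ∈ S, ∀ y ∈ S, x ≠ y → r < dist x y} := by
  refine ⟨hA.toFinset.card, ?_⟩
  rintro _ ⟨S, hSA, rfl, -⟩
  exact Finset.card_le_card fun x hx => hA.mem_toFinset.2 (hSA hx)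

lemma card_le_packingNum (hA : A.Finite) {r : ℝ} {S : Finset (EuclideanSpace ℝ (Fin d))}
    (hSA : ↑S ⊆ A) (hS : ∀ x ∈ S, ∀ y ∈ S, x ≠ y → r < dist x y) :
    S.card ≤ packingNum dist A r :=
  le_csSup (bddAbove_card_packing hA r) ⟨S, hSA, rfl, hS⟩

lemma exists_packing_card_eq_packingNum (hA : A.Finite) (r : ℝ) :
    ∃ P : Finset (EuclideanSpace ℝ (Fin d)), ↑P ⊆ A ∧ P.card = packingNum dist A r ∧
      ∀ x ∈ P, ∀ y ∈ P, x ≠ y → r < dist x y := by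
  refine Nat.sSup_mem ?_ (bddAbove_card_packing hA r)
  exact ⟨0, ∅, by simp⟩

lemma exists_packing_card_eq_packingNum_covering (hA : A.Finite) {r : ℝ} (hr : 0 ≤ r) :
    ∃ P : Finset (EuclideanSpace ℝ (Fin d)), ↑P ⊆ A ∧ P.card = packingNum dist A r ∧
      A ⊆ ⋃ p ∈ P, closedBall p r := by
  classical
  obtain ⟨P, hPA, hcard, hsep⟩ := exists_packing_card_eq_packingNum hA r
  refine ⟨P, hPA, hcard, fun a ha => ?_⟩
  by_contra hfar
  simp only [mem_iUnion₂, mem_closedBall, not_exists, not_le] at hfar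
  have haP : a ∉ P := fun h => (hfar a h).not_ge (by rw [dist_self]; exact hr)
  have hgrow := card_le_packingNum hA (S := insert a P)
    (by rw [Finset.coe_insert]; exact insert_subset ha hPA) <| by
      intro x hx y hy hxy
      rw [Finset.mem_insert] at hx hy
      rcases hx with rfl | hx <;> rcases hy with rfl | hy
      · exact absurd rfl hxy
      · exact hfar y hy
      · exact dist_comm x y ▸ hfar x hx
      · exact hsep x hx y hy hxy
  rw [Finset.card_insert_of_notMem haP, hcard] at hgrow
  omega

end Euclidean

theorem volume_annulus_le_packing_ball_general
    (d : ℕ) (hd : 2 ≤ d) (r δ : ℝ) (hr : 0 < r) (hδ : 0 < δ) (N : ℕ)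
    (x : Fin N → EuclideanSpace ℝ (Fin d)) :
    volume ((Set.range x + (r + δ) • unitBall d) \ (Set.range x + r • unitBall d)) ≤
      ENNReal.ofReal ((packingNum dist (Set.range x) r : ℝ) *
        (2 ^ (d - 1) * omegaVol d * ((r + δ) ^ d - r ^ d))) := by
  have hrR : r ≤ r + δ := by linarith
  obtain ⟨P, hPA, hcard, hcover⟩ :=
    exists_packing_card_eq_packingNum_covering (finite_range x) hr.le
  rw [unitBall, smul_unitClosedBall_of_nonneg (hr.le.trans hrR),
    smul_unitClosedBall_of_nonneg hr.le]
  calc volume (parallelShell (range x) r (r + δ))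
      ≤ volume (⋃ p ∈ P, parallelShell (range x ∩ Metric.closedBall p r) r (r + δ)) :=
        measure_mono (parallelShell_subset_biUnion_inter hcover r (r + δ))
    _ ≤ ∑ p ∈ P, volume (parallelShell (range x ∩ Metric.closedBall p r) r (r + δ)) :=
        measure_biUnion_finset_le P _
    _ ≤ ∑ _p ∈ P, ENNReal.ofReal (2 ^ (d - 1) * omegaVol d * ((r + δ) ^ d - r ^ d)) :=
        Finset.sum_le_sum fun p hp => volume_parallelShell_le_omegaVol hd
          ((finite_range x).inter_of_left _) ⟨p, hPA hp, Metric.mem_closedBall_self hr.le⟩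
          inter_subset_right hrR
    _ = _ := by
        rw [Finset.sum_const, nsmul_eq_mul, hcard, ENNReal.ofReal_mul (Nat.cast_nonneg _),
          ENNReal.ofReal_natCast]

/-- For `d ≥ 2`, `r, δ > 0` and a nonempty finite set
`A = {x_1, …, x_N} ⊆ ℝ^d`,
`λ(A_{⊕(r+δ)} \ A_{⊕r}) ≤ N_B(A; r) · 2^{d−1} ω_d ((r+δ)^d − r^d)`,
where `N_B(A; r)` is the `r`-packing number of `A` in the `ℓ²` metric. -/
theorem volume_annulus_le_packing_ball
    (d : ℕ) (hd : 2 ≤ d) (r δ : ℝ) (hr : 0 < r) (hδ : 0 < δ) (N : ℕ) (hN : 1 ≤ N)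
    (x : Fin N → EuclideanSpace ℝ (Fin d)) :
    volume ((Set.range x + (r + δ) • unitBall d) \ (Set.range x + r • unitBall d)) ≤
      ENNReal.ofReal ((packingNum dist (Set.range x) r : ℝ) *
        (2 ^ (d - 1) * omegaVol d * ((r + δ) ^ d - r ^ d))) :=
  volume_annulus_le_packing_ball_general d hd r δ hr hδ N x
end

section
/- Let d ≥ 2, R ≥ r > 0, δ > 0, and let A be a nonempty closed subset of the closed Euclidean ball of radius R centered at the origin in ℝ^d. Then λ(A_{⊕(r+δ)} \ A_{⊕r}) ≤ ((R + r/2)^d / (r/2)^d) · 2^{d−1} ω_d ((r+δ)^d − r^d), and the upper surface area of A_{⊕r} satisfies λ̄(∂A_{⊕r}) ≤ ((R + r/2)^d / (r/2)^d) · 2^{d−1} d ω_d r^{d−1}. -/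
/-!
Kneser's scaling bound: for compact `A` and `0 < r ≤ s`, `λ(A_{⊕s}) ≤ (s/r)^d λ(A_{⊕r})`.
For a finite union of balls this follows by adding one ball at a time: the homothety of ratio
`s/r` centred at the new centre maps the part of its small ball outside the old small balls onto
a superset of the part of its big ball outside the old big balls. Compactness reduces `A` to
finitely many centres. Hence `λ(A_{⊕(r+δ)} \ A_{⊕r}) ≤ ((r+δ)^d/r^d - 1) λ(A_{⊕r})`, and
`λ(A_{⊕r}) ≤ ω_d (R+r)^d` because `A_{⊕r} ⊆ B(0; R+r)`. Dividing by `δ` and using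
`(r+δ)^d - r^d ≤ d (2r)^{d-1} δ` for `δ ≤ r` bounds the surface area.
-/

open MeasureTheory Set Filter
open scoped ENNReal Pointwise

open Metric Module Topology

section AddHaar

variable {E : Type*} [NormedAddCommGroup E] [NormedSpace ℝ E]

theorem homothety_mapsTo_closedBall_diff_biUnion {ρ ρ' : ℝ} (hρ : 0 < ρ) (h : ρ ≤ ρ')
    (a : E) (t : Set E) :
    MapsTo (AffineMap.homothety a (ρ / ρ'))
      (closedBall a ρ' \ ⋃ x ∈ t, closedBall x ρ') (closedBall a ρ \ ⋃ x ∈ t, closedBall x ρ) := by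
  have hρ' : 0 < ρ' := hρ.trans_le h
  have hc : ‖ρ / ρ'‖ = ρ / ρ' := Real.norm_of_nonneg (by positivity)
  have hc' : ‖1 - ρ / ρ'‖ = 1 - ρ / ρ' :=
    Real.norm_of_nonneg (sub_nonneg.2 ((div_le_one hρ').2 h))
  rintro z ⟨hz, hzt⟩
  simp only [mem_closedBall, mem_iUnion, not_exists] at hz hzt
  refine ⟨?_, fun hmem => ?_⟩
  · rw [mem_closedBall, dist_homothety_center, hc, dist_comm]
    calc ρ / ρ' * dist z a ≤ ρ / ρ' * ρ' := by gcongr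
      _ = ρ := div_mul_cancel₀ ρ hρ'.ne'
  · obtain ⟨y, hy, hzy⟩ := mem_iUnion₂.1 hmem
    refine hzt y hy ?_
    calc dist z y
        ≤ dist (AffineMap.homothety a (ρ / ρ') z) z + dist (AffineMap.homothety a (ρ / ρ') z) y :=
          dist_triangle_left _ _ _
      _ ≤ (1 - ρ / ρ') * ρ' + ρ := by
          rw [dist_homothety_self, hc', dist_comm]
          gcongr
          · exact sub_nonneg.2 ((div_le_one hρ').2 h)
          · exact hzy
      _ = ρ' := by field_simp; ring

variable [MeasurableSpace E] [BorelSpace E] [FiniteDimensional ℝ E] (μ : Measure E)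
  [μ.IsAddHaarMeasure]

theorem addHaar_biUnion_closedBall_le_mul {ρ ρ' : ℝ} (hρ : 0 < ρ) (h : ρ ≤ ρ') (t : Finset E) :
    μ (⋃ x ∈ t, closedBall x ρ') ≤
      ENNReal.ofReal ((ρ' / ρ) ^ finrank ℝ E) * μ (⋃ x ∈ t, closedBall x ρ) := by
  classical
  have hρ' : 0 < ρ' := hρ.trans_le h
  induction t using Finset.induction_on with
  | empty => simp
  | insert a t _ ih =>
    have hsplit : ∀ s : ℝ, μ (⋃ x ∈ insert a t, closedBall x s) =
        μ (⋃ x ∈ t, closedBall x s) + μ (closedBall a s \ ⋃ x ∈ t, closedBall x s) := fun s => by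
      rw [Finset.set_biUnion_insert, union_comm, ← measure_add_sdiff]
      exact (t.measurableSet_biUnion fun _ _ => measurableSet_closedBall).nullMeasurableSet
    have hnew : closedBall a ρ' \ ⋃ x ∈ t, closedBall x ρ' ⊆
        AffineMap.homothety a (ρ' / ρ) '' (closedBall a ρ \ ⋃ x ∈ t, closedBall x ρ) := fun z hz =>
      ⟨_, homothety_mapsTo_closedBall_diff_biUnion hρ h a t hz, by
        rw [← AffineMap.homothety_mul_apply, div_mul_div_cancel₀ hρ.ne', div_self hρ'.ne',
          AffineMap.homothety_one, AffineMap.id_apply]⟩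
    rw [hsplit, hsplit, mul_add]
    gcongr
    calc μ (closedBall a ρ' \ ⋃ x ∈ t, closedBall x ρ')
        ≤ μ (AffineMap.homothety a (ρ' / ρ) '' (closedBall a ρ \ ⋃ x ∈ t, closedBall x ρ)) :=
          measure_mono hnew
      _ = _ := by rw [Measure.addHaar_image_homothety, abs_of_nonneg (by positivity)]

theorem IsCompact.addHaar_cthickening_le_mul {A : Set E} (hA : IsCompact A) {r s : ℝ}
    (hr : 0 < r) (hrs : r ≤ s) :
    μ (cthickening s A) ≤ ENNReal.ofReal ((s / r) ^ finrank ℝ E) * μ (cthickening r A) := by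
  have hs : 0 < s := hr.trans_le hrs
  have hcover : ∀ s' ∈ Ioi s,
      μ (cthickening s A) ≤ ENNReal.ofReal ((s' / r) ^ finrank ℝ E) * μ (cthickening r A) := by
    intro s' hs'
    have hsub : cthickening s A ⊆ ⋃ a ∈ A, ball a s' := by
      rw [← thickening_eq_biUnion_ball]
      exact cthickening_subset_thickening' (hs.trans hs') hs' A
    obtain ⟨T, hTA, hT, hAT⟩ :=
      (hA.cthickening (r := s)).elim_finite_subcover_image (fun _ _ => isOpen_ball) hsub
    calc μ (cthickening s A)
        ≤ μ (⋃ a ∈ hT.toFinset, closedBall a s') := by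
          refine measure_mono (hAT.trans (iUnion₂_mono' fun a ha => ?_))
          exact ⟨a, hT.mem_toFinset.2 ha, ball_subset_closedBall⟩
      _ ≤ ENNReal.ofReal ((s' / r) ^ finrank ℝ E) * μ (⋃ a ∈ hT.toFinset, closedBall a r) :=
          addHaar_biUnion_closedBall_le_mul μ hr (hrs.trans (le_of_lt hs')) _
      _ ≤ ENNReal.ofReal ((s' / r) ^ finrank ℝ E) * μ (cthickening r A) := by
          gcongr
          exact iUnion₂_subset fun a ha =>
            closedBall_subset_cthickening (hTA (hT.mem_toFinset.1 ha)) r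
  have hlim : Tendsto (fun s' => ENNReal.ofReal ((s' / r) ^ finrank ℝ E) * μ (cthickening r A))
      (𝓝[>] s) (𝓝 (ENNReal.ofReal ((s / r) ^ finrank ℝ E) * μ (cthickening r A))) := by
    refine ENNReal.Tendsto.mul_const ?_ (Or.inl (ENNReal.ofReal_pos.2 (by positivity)).ne')
    exact ENNReal.tendsto_ofReal (((tendsto_id.div_const r).pow _).mono_left nhdsWithin_le_nhds)
  exact ge_of_tendsto hlim (eventually_mem_nhdsWithin.mono hcover)

theorem IsCompact.addHaar_cthickening_diff_le {A : Set E} (hA : IsCompact A) {r δ : ℝ}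
    (hr : 0 < r) (hδ : 0 ≤ δ) :
    μ (cthickening (r + δ) A \ cthickening r A) ≤
      ENNReal.ofReal (((r + δ) ^ finrank ℝ E - r ^ finrank ℝ E) / r ^ finrank ℝ E) *
        μ (cthickening r A) := by
  set n := finrank ℝ E
  have hu : 0 ≤ ((r + δ) ^ n - r ^ n) / r ^ n := by
    have : r ^ n ≤ (r + δ) ^ n := by gcongr; linarith
    positivity
  have hratio : ((r + δ) / r) ^ n = 1 + ((r + δ) ^ n - r ^ n) / r ^ n := by
    rw [div_pow, one_add_div (by positivity), add_sub_cancel]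
  rw [measure_sdiff (cthickening_mono (by linarith) A) isClosed_cthickening.nullMeasurableSet
    hA.cthickening.measure_lt_top.ne, tsub_le_iff_right]
  calc μ (cthickening (r + δ) A)
      ≤ ENNReal.ofReal (((r + δ) / r) ^ n) * μ (cthickening r A) :=
        hA.addHaar_cthickening_le_mul μ hr (by linarith)
    _ = _ := by
      rw [hratio, ENNReal.ofReal_add zero_le_one hu, ENNReal.ofReal_one, add_mul, one_mul, add_comm]

theorem addHaar_cthickening_le_of_subset_closedBall {A : Set E} {x : E} {R r : ℝ}
    (hAR : A ⊆ closedBall x R) (hR : 0 ≤ R) (hr : 0 ≤ r) :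
    μ (cthickening r A) ≤ ENNReal.ofReal ((R + r) ^ finrank ℝ E) * μ (closedBall 0 1) := by
  rw [← Measure.addHaar_closedBall' μ x (by positivity), add_comm R]
  exact measure_mono <|
    (cthickening_subset_of_subset r hAR).trans (cthickening_closedBall hr hR x).subset

end AddHaar

section Euclidean

variable {d : ℕ}

theorem smul_unitBall_of_nonneg {s : ℝ} (hs : 0 ≤ s) : s • unitBall d = closedBall 0 s :=
  smul_unitClosedBall_of_nonneg hs

theorem IsCompact.add_smul_unitBall {A : Set (EuclideanSpace ℝ (Fin d))} (hA : IsCompact A)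
    {s : ℝ} (hs : 0 ≤ s) : A + s • unitBall d = cthickening s A := by
  rw [smul_unitBall_of_nonneg hs, hA.add_closedBall_zero hs]

theorem add_smul_unitBall_add_smul_unitBall (A : Set (EuclideanSpace ℝ (Fin d))) {r δ : ℝ}
    (hr : 0 ≤ r) (hδ : 0 ≤ δ) : A + r • unitBall d + δ • unitBall d = A + (r + δ) • unitBall d := by
  rw [add_assoc, smul_unitBall_of_nonneg hr, smul_unitBall_of_nonneg hδ,
    smul_unitBall_of_nonneg (add_nonneg hr hδ), closedBall_add_closedBall hr hδ, zero_add]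

theorem omegaVol_pos (d : ℕ) : 0 < omegaVol d :=
  div_pos (Real.rpow_pos_of_pos Real.pi_pos _) (Real.Gamma_pos_of_pos (by positivity))

theorem volume_unitBall (hd : 0 < d) : volume (unitBall d) = ENNReal.ofReal (omegaVol d) := by
  have : Nonempty (Fin d) := ⟨⟨0, hd⟩⟩
  have hsqrt : Real.sqrt Real.pi ^ d = Real.pi ^ ((d : ℝ) / 2) := by
    rw [Real.sqrt_eq_rpow, ← Real.rpow_natCast, ← Real.rpow_mul Real.pi_pos.le, one_div_mul_eq_div]
  rw [unitBall, EuclideanSpace.volume_closedBall, Fintype.card_fin, ENNReal.ofReal_one, one_pow,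
    one_mul, hsqrt, omegaVol, add_comm]

theorem volume_add_smul_unitBall_diff_le (hd : 0 < d) {A : Set (EuclideanSpace ℝ (Fin d))}
    (hA : IsCompact A) {R r δ : ℝ} (hAR : A ⊆ closedBall 0 R) (hR : 0 ≤ R) (hr : 0 < r)
    (hδ : 0 ≤ δ) :
    volume ((A + (r + δ) • unitBall d) \ (A + r • unitBall d)) ≤
      ENNReal.ofReal ((R + r) ^ d / r ^ d * (omegaVol d * ((r + δ) ^ d - r ^ d))) := by
  have hshell := hA.addHaar_cthickening_diff_le volume hr hδ
  have hbound := addHaar_cthickening_le_of_subset_closedBall volume hAR hR hr.le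
  rw [finrank_euclideanSpace_fin] at hshell hbound
  rw [hA.add_smul_unitBall (by linarith), hA.add_smul_unitBall hr.le]
  have hratio : 0 ≤ ((r + δ) ^ d - r ^ d) / r ^ d :=
    div_nonneg (sub_nonneg.2 (by gcongr; linarith)) (by positivity)
  calc _ ≤ _ := hshell
    _ ≤ ENNReal.ofReal (((r + δ) ^ d - r ^ d) / r ^ d) *
          (ENNReal.ofReal ((R + r) ^ d) * volume (unitBall d)) := by gcongr; exact hbound
    _ = _ := by
      rw [volume_unitBall hd, ← ENNReal.ofReal_mul (by positivity), ← ENNReal.ofReal_mul hratio]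
      ring_nf

end Euclidean

theorem add_div_pow_le_add_half_div_half_pow {R r : ℝ} (hR : 0 ≤ R) (hr : 0 < r) (n : ℕ) :
    (R + r) ^ n / r ^ n ≤ (R + r / 2) ^ n / (r / 2) ^ n := by
  rw [← div_pow, ← div_pow]
  refine pow_le_pow_left₀ (by positivity) ?_ n
  rw [div_le_div_iff₀ hr (by positivity)]
  nlinarith

theorem pow_add_sub_pow_le {r δ : ℝ} (hr : 0 ≤ r) (hδ : 0 ≤ δ) (hδr : δ ≤ r) (n : ℕ) :
    (r + δ) ^ n - r ^ n ≤ 2 ^ (n - 1) * n * r ^ (n - 1) * δ :=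
  calc (r + δ) ^ n - r ^ n
      ≤ |r + δ - r| * n * max |r + δ| |r| ^ (n - 1) :=
        (le_abs_self _).trans (abs_pow_sub_pow_le ..)
    _ = δ * n * (r + δ) ^ (n - 1) := by
      rw [add_sub_cancel_left, abs_of_nonneg hδ, abs_of_nonneg (by linarith), abs_of_nonneg hr,
        max_eq_left (by linarith)]
    _ ≤ δ * n * (2 * r) ^ (n - 1) := by gcongr; linarith
    _ = _ := by rw [mul_pow]; ring

theorem reverse_isoperimetric_bounded_ball_general
    (d : ℕ) (hd : 2 ≤ d) (R r δ : ℝ) (hr : 0 < r) (hRr : r ≤ R) (hδ : 0 < δ)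
    (A : Set (EuclideanSpace ℝ (Fin d))) (hA : IsClosed A)
    (hAsub : A ⊆ Metric.closedBall 0 R) :
    volume ((A + (r + δ) • unitBall d) \ (A + r • unitBall d)) ≤
      ENNReal.ofReal ((R + r / 2) ^ d / (r / 2) ^ d *
        (2 ^ (d - 1) * omegaVol d * ((r + δ) ^ d - r ^ d))) ∧
    upperSurf (unitBall d) (A + r • unitBall d) ≤
      ENNReal.ofReal ((R + r / 2) ^ d / (r / 2) ^ d *
        (2 ^ (d - 1) * d * omegaVol d * r ^ (d - 1))) := by
  have hR : 0 ≤ R := hr.le.trans hRr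
  have hAc : IsCompact A := (isCompact_closedBall 0 R).of_isClosed_subset hA hAsub
  have hshell (δ' : ℝ) (hδ' : 0 ≤ δ') :=
    volume_add_smul_unitBall_diff_le (by omega) hAc hAsub hR hr hδ'
  have hK := add_div_pow_le_add_half_div_half_pow hR hr d
  have hω := (omegaVol_pos d).le
  refine ⟨(hshell δ hδ.le).trans (ENNReal.ofReal_le_ofReal ?_), ?_⟩
  · have hΔ : 0 ≤ (r + δ) ^ d - r ^ d := sub_nonneg.2 (by gcongr; linarith)
    calc _ ≤ (R + r / 2) ^ d / (r / 2) ^ d *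
          (omegaVol d * (2 ^ (d - 1) * ((r + δ) ^ d - r ^ d))) := by
          gcongr
          exact le_mul_of_one_le_left hΔ (one_le_pow₀ one_le_two)
      _ = _ := by ring
  · refine limsup_le_of_le (by isBoundedDefault) ?_
    filter_upwards [Ioc_mem_nhdsGT hr] with δ' ⟨hδ'0, hδ'r⟩
    rw [add_smul_unitBall_add_smul_unitBall A hr.le hδ'0.le,
      ENNReal.div_le_iff (ENNReal.ofReal_pos.2 hδ'0).ne' ENNReal.ofReal_ne_top,
      ← ENNReal.ofReal_mul (by positivity)]
    calc _ ≤ _ := le_measure_sdiff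
      _ ≤ _ := hshell δ' hδ'0.le
      _ ≤ _ := ENNReal.ofReal_le_ofReal ?_
    have hΔ : 0 ≤ (r + δ') ^ d - r ^ d := sub_nonneg.2 (by gcongr; linarith)
    calc _ ≤ (R + r / 2) ^ d / (r / 2) ^ d *
          (omegaVol d * (2 ^ (d - 1) * d * r ^ (d - 1) * δ')) :=
          mul_le_mul hK (mul_le_mul_of_nonneg_left (pow_add_sub_pow_le hr.le hδ'0.le hδ'r d) hω)
            (mul_nonneg hω hΔ) (by positivity)
      _ = _ := by ring

/-- For `d ≥ 2`, `R ≥ r > 0`, `δ > 0` and a nonempty closed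
`A ⊆ B(0; R) ⊆ ℝ^d`:
`λ(A_{⊕(r+δ)} \ A_{⊕r}) ≤ ((R+r/2)^d/(r/2)^d) · 2^{d−1} ω_d ((r+δ)^d − r^d)` and
`λ̄(∂A_{⊕r}) ≤ ((R+r/2)^d/(r/2)^d) · 2^{d−1} d ω_d r^{d−1}`. -/
theorem reverse_isoperimetric_bounded_ball
    (d : ℕ) (hd : 2 ≤ d) (R r δ : ℝ) (hr : 0 < r) (hRr : r ≤ R) (hδ : 0 < δ)
    (A : Set (EuclideanSpace ℝ (Fin d))) (hA : IsClosed A) (hAne : A.Nonempty)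
    (hAsub : A ⊆ Metric.closedBall 0 R) :
    volume ((A + (r + δ) • unitBall d) \ (A + r • unitBall d)) ≤
      ENNReal.ofReal ((R + r / 2) ^ d / (r / 2) ^ d *
        (2 ^ (d - 1) * omegaVol d * ((r + δ) ^ d - r ^ d))) ∧
    upperSurf (unitBall d) (A + r • unitBall d) ≤
      ENNReal.ofReal ((R + r / 2) ^ d / (r / 2) ^ d *
        (2 ^ (d - 1) * d * omegaVol d * r ^ (d - 1))) :=
  reverse_isoperimetric_bounded_ball_general d hd R r δ hr hRr hδ A hA hAsub
end
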